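/- arXiv:1905.11456 — 5 statements merged into one kernel-verified Lean document; each statement's English description precedes it below -/
import Mathlib

section
/- Suppose A, F : ℝ → ℝ are differentiable and satisfy A' = (q+2Σ₊)·A and F' = 2(q+2Σ₊)·F for a continuous function τ ↦ q(τ)+2Σ₊(τ). If F(τ₀) ≠ 0, then the ratio A²/F is constant in τ; i.e., there is a constant h with A(τ)² = h·F(τ) for all τ. -/
private lemma exp_factor (g c : ℝ → ℝ) (hg : Differentiable ℝ g) (hc : Continuous c)
    (hode : ∀ τ, deriv g τ = 2 * c τ * g τ) (τ₀ : ℝ) :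
    ∀ τ, g τ * Real.exp (-(2 * ∫ t in τ₀..τ, c t)) = g τ₀ := by
  set C : ℝ → ℝ := fun τ => ∫ t in τ₀..τ, c t with hC
  have hCd : ∀ τ, HasDerivAt C (c τ) τ := by
    intro τ
    exact intervalIntegral.integral_hasDerivAt_right
      (hc.intervalIntegrable _ _) hc.aestronglyMeasurable.stronglyMeasurableAtFilter
      hc.continuousAt
  set G : ℝ → ℝ := fun τ => g τ * Real.exp (-(2 * C τ)) with hG
  have key : ∀ τ, HasDerivAt G 0 τ := by
    intro τ
    have h1 : HasDerivAt g (2 * c τ * g τ) τ := by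
      have := (hg τ).hasDerivAt
      rwa [hode τ] at this
    have h2 : HasDerivAt (fun τ => Real.exp (-(2 * C τ)))
        (Real.exp (-(2 * C τ)) * (-(2 * c τ))) τ := by
      have : HasDerivAt (fun τ => -(2 * C τ)) (-(2 * c τ)) τ := ((hCd τ).const_mul 2).neg
      exact this.exp
    have h3 : HasDerivAt (fun y => g y * Real.exp (-(2 * C y)))
        (2 * c τ * g τ * Real.exp (-(2 * C τ)) + g τ * (Real.exp (-(2 * C τ)) * -(2 * c τ))) τ :=
      h1.mul h2
    convert h3 using 1
    ring
  have hGdiff : Differentiable ℝ G := fun x => (key x).differentiableAt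
  have hconst := is_const_of_deriv_eq_zero hGdiff (fun x => (key x).deriv)
  intro τ
  have := hconst τ τ₀
  simpa [hG, hC, intervalIntegral.integral_same] using this

/-- If A' = c·A and F' = 2c·F with c continuous, and F(τ₀) ≠ 0, then A²/F is constant:
there is a constant h with A² = h·F everywhere. -/
theorem stmt2 (A F c : ℝ → ℝ) (hA : Differentiable ℝ A) (hF : Differentiable ℝ F)
    (hc : Continuous c)
    (hodeA : ∀ τ, deriv A τ = c τ * A τ)
    (hodeF : ∀ τ, deriv F τ = 2 * c τ * F τ)
    (τ₀ : ℝ) (hF0 : F τ₀ ≠ 0) :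
    ∃ h : ℝ, ∀ τ, (A τ) ^ 2 = h * F τ := by
  have hA2 : Differentiable ℝ (fun τ => A τ ^ 2) := hA.pow 2
  have hodeA2 : ∀ τ, deriv (fun τ => A τ ^ 2) τ = 2 * c τ * A τ ^ 2 := by
    intro τ
    have h1 : HasDerivAt A (c τ * A τ) τ := by
      have := (hA τ).hasDerivAt; rwa [hodeA τ] at this
    have h2 : HasDerivAt (fun τ => A τ ^ 2) (2 * A τ ^ (2 - 1) * (c τ * A τ)) τ := h1.pow 2
    rw [h2.deriv]; ring
  have hAfac := exp_factor (fun τ => A τ ^ 2) c hA2 hc hodeA2 τ₀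
  have hFfac := exp_factor F c hF hc hodeF τ₀
  refine ⟨A τ₀ ^ 2 / F τ₀, fun τ => ?_⟩
  have e1 := hAfac τ
  have e2 := hFfac τ
  have hepos : Real.exp (-(2 * ∫ t in τ₀..τ, c t)) ≠ 0 := (Real.exp_pos _).ne'
  field_simp at e1 e2 ⊢
  -- A τ ^2 * e = A τ₀ ^2, F τ * e = F τ₀
  have : A τ ^ 2 * (F τ₀ * Real.exp (-(2 * ∫ t in τ₀..τ, c t))) =
      A τ₀ ^ 2 * (F τ * Real.exp (-(2 * ∫ t in τ₀..τ, c t))) := by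
    rw [show F τ * Real.exp (-(2 * ∫ t in τ₀..τ, c t)) = F τ₀ from hFfac τ]
    rw [← hAfac τ]; ring
  have := mul_right_cancel₀ hepos (by linarith [this] : A τ ^ 2 * F τ₀ *
      Real.exp (-(2 * ∫ t in τ₀..τ, c t)) = A τ₀ ^ 2 * F τ *
      Real.exp (-(2 * ∫ t in τ₀..τ, c t)))
  linarith
end

section
/- Let Σ₊, Σ₋, Σ×, Σ₂, Σ₃, A, N₊, N₋, N×, Θ, V₁, V₃, Ω be differentiable real functions of τ satisfying the evolution equations of the Bianchi I–VII_h system with a free scalar field and γ-law fluid. Define C₁ = V₃(A−√3 N×), C₂ = V₃(N₊−√3 N₋), C₃ = Σ₊A + Σ₋N× − Σ×N₋ − ΘV₁, C₄ = Σ₃(N₊−√3 N₋), C₅ = Σ₃(N×−√3 A) − 2ΘV₃, C₆ = −1+Ω+Θ²+V₁²+V₃²+Σ₊²+Σ₋²+Σ×²+Σ₃²+A²+N₋²+N×². Then the vector (C₁,…,C₆) satisfies a homogeneous linear ODE system with coefficients depending on the state variables; in particular, if C₁=⋯=C₆=0 at some time τ₀, then C₁=⋯=C₆=0 for all τ. 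-/
open Set

private lemma gr_aux {f f' K : ℝ → ℝ}
    (hf : ∀ x, HasDerivAt f (f' x) x) (hK : Continuous K)
    (hb : ∀ x, |f' x| ≤ K x * f x) (hpos : ∀ x, 0 ≤ f x)
    {a x : ℝ} (ha : f a = 0) (hax : a ≤ x) : f x = 0 := by
  obtain ⟨M, hM⟩ := (isCompact_Icc (a := a) (b := x)).exists_bound_of_continuousOn
    hK.continuousOn
  have bound : ∀ t ∈ Ico a x, ‖f' t‖ ≤ M * ‖f t‖ + 0 := by
    intro t ht
    have h2 : K t ≤ M := by
      have h := hM t ⟨ht.1, ht.2.le⟩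
      rw [Real.norm_eq_abs] at h
      exact (le_abs_self _).trans h
    rw [Real.norm_eq_abs, Real.norm_eq_abs, abs_of_nonneg (hpos t), add_zero]
    exact (hb t).trans (mul_le_mul_of_nonneg_right h2 (hpos t))
  have key := norm_le_gronwallBound_of_norm_deriv_right_le
    (fun t _ => (hf t).continuousAt.continuousWithinAt)
    (fun t _ => (hf t).hasDerivWithinAt)
    (show ‖f a‖ ≤ 0 by simp [ha]) bound x ⟨hax, le_rfl⟩
  rw [gronwallBound_ε0_δ0] at key
  exact norm_le_zero_iff.mp key

private lemma gr_zero {f f' K : ℝ → ℝ}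
    (hf : ∀ x, HasDerivAt f (f' x) x) (hK : Continuous K)
    (hb : ∀ x, |f' x| ≤ K x * f x) (hpos : ∀ x, 0 ≤ f x)
    (a : ℝ) (ha : f a = 0) : ∀ x, f x = 0 := by
  intro x
  rcases le_total a x with h | h
  · exact gr_aux hf hK hb hpos ha h
  · have hg : ∀ t, HasDerivAt (fun u => f (2 * a - u)) (-f' (2 * a - t)) t := by
      intro t
      have h1 : HasDerivAt (fun u : ℝ => 2 * a - u) (-1) t := by
        simpa using (hasDerivAt_id t).const_sub (2 * a)
      have h2 := (hf (2 * a - t)).comp t h1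
      simpa [Function.comp_def] using h2
    have hres := gr_aux (f := fun u => f (2 * a - u)) (f' := fun u => -f' (2 * a - u))
      (K := fun u => K (2 * a - u)) hg
      (by fun_prop)
      (fun u => by simpa using hb (2 * a - u))
      (fun u => hpos _)
      (a := a) (x := 2 * a - x)
      (show f (2 * a - a) = 0 by rw [show 2 * a - a = a by ring]; exact ha)
      (by linarith)
    have hres' : f (2 * a - (2 * a - x)) = 0 := hres
    rw [show 2 * a - (2 * a - x) = x by ring] at hres'
    exact hres'

set_option maxHeartbeats 1000000 in
/-- The constraints C₁,…,C₆ of the Bianchi I–VII_h system with a free scalar field and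
γ-law fluid satisfy a homogeneous linear ODE system; in particular the constraint
surface C₁=⋯=C₆=0 is preserved in time. -/
theorem stmt3 (γ τ₀ : ℝ)
    (Om Th V1 V3 Sp Sm Sx S3 A Np Nm Nx q C1 C2 C3 C4 C5 C6 : ℝ → ℝ)
    (hOmd : Differentiable ℝ Om) (hThd : Differentiable ℝ Th)
    (hV1d : Differentiable ℝ V1) (hV3d : Differentiable ℝ V3)
    (hSpd : Differentiable ℝ Sp) (hSmd : Differentiable ℝ Sm)
    (hSxd : Differentiable ℝ Sx) (hS3d : Differentiable ℝ S3)
    (hAd : Differentiable ℝ A) (hNpd : Differentiable ℝ Np)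
    (hNmd : Differentiable ℝ Nm) (hNxd : Differentiable ℝ Nx)
    (hq : ∀ τ, q τ = (3 * γ / 2 - 1) * Om τ + 2 * (Th τ) ^ 2
      + 2 * ((Sp τ) ^ 2 + (Sm τ) ^ 2 + (Sx τ) ^ 2 + (S3 τ) ^ 2))
    (hOm : ∀ τ, deriv Om τ = Om τ * (2 * q τ + 2 - 3 * γ))
    (hTh : ∀ τ, deriv Th τ = Th τ * (q τ - 2) - 2 * A τ * V1 τ)
    (hV1 : ∀ τ, deriv V1 τ = V1 τ * (q τ + 2 * Sp τ) - 2 * Real.sqrt 3 * S3 τ * V3 τ)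
    (hV3 : ∀ τ, deriv V3 τ = V3 τ * (q τ - Sp τ + Real.sqrt 3 * Sm τ))
    (hSp : ∀ τ, deriv Sp τ = Sp τ * (q τ - 2) + 3 * (S3 τ) ^ 2
      - 2 * ((Nm τ) ^ 2 + (Nx τ) ^ 2) + (V3 τ) ^ 2 - 2 * (V1 τ) ^ 2)
    (hSm : ∀ τ, deriv Sm τ = Sm τ * (q τ - 2)
      + Real.sqrt 3 * (2 * (Sx τ) ^ 2 - (S3 τ) ^ 2) + 2 * A τ * Nx τ
      - 2 * Nm τ * Np τ - Real.sqrt 3 * (V3 τ) ^ 2)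
    (hSx : ∀ τ, deriv Sx τ = Sx τ * (q τ - 2 - 2 * Real.sqrt 3 * Sm τ)
      - 2 * A τ * Nm τ - 2 * Np τ * Nx τ)
    (hS3 : ∀ τ, deriv S3 τ = S3 τ * (q τ - 2 - 3 * Sp τ + Real.sqrt 3 * Sm τ)
      + 2 * Real.sqrt 3 * V1 τ * V3 τ)
    (hA : ∀ τ, deriv A τ = A τ * (q τ + 2 * Sp τ))
    (hNp : ∀ τ, deriv Np τ = Np τ * (q τ + 2 * Sp τ) + 6 * Sm τ * Nm τ + 6 * Sx τ * Nx τ)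
    (hNm : ∀ τ, deriv Nm τ = Nm τ * (q τ + 2 * Sp τ) + 2 * Real.sqrt 3 * Sx τ * Nx τ
      + 2 * Sm τ * Np τ)
    (hNx : ∀ τ, deriv Nx τ = Nx τ * (q τ + 2 * Sp τ) - 2 * Real.sqrt 3 * Sx τ * Nm τ
      + 2 * Sx τ * Np τ)
    (hC1 : ∀ τ, C1 τ = V3 τ * (A τ - Real.sqrt 3 * Nx τ))
    (hC2 : ∀ τ, C2 τ = V3 τ * (Np τ - Real.sqrt 3 * Nm τ))
    (hC3 : ∀ τ, C3 τ = Sp τ * A τ + Sm τ * Nx τ - Sx τ * Nm τ - Th τ * V1 τ)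
    (hC4 : ∀ τ, C4 τ = S3 τ * (Np τ - Real.sqrt 3 * Nm τ))
    (hC5 : ∀ τ, C5 τ = S3 τ * (Nx τ - Real.sqrt 3 * A τ) - 2 * Th τ * V3 τ)
    (hC6 : ∀ τ, C6 τ = -1 + Om τ + (Th τ) ^ 2 + (V1 τ) ^ 2 + (V3 τ) ^ 2
      + (Sp τ) ^ 2 + (Sm τ) ^ 2 + (Sx τ) ^ 2 + (S3 τ) ^ 2
      + (A τ) ^ 2 + (Nm τ) ^ 2 + (Nx τ) ^ 2) :
    (∀ τ, deriv C1 τ = C1 τ * (2 * q τ + Sp τ + Real.sqrt 3 * Sm τ)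
        - 2 * Real.sqrt 3 * C2 τ * Sx τ) ∧
    (∀ τ, deriv C2 τ = C2 τ * (2 * q τ + Sp τ - Real.sqrt 3 * Sm τ)) ∧
    (∀ τ, deriv C3 τ = 2 * C3 τ * (-1 + q τ + Sp τ) + C1 τ * V3 τ
        - Real.sqrt 3 * C5 τ * S3 τ) ∧
    (∀ τ, deriv C4 τ = C4 τ * (-2 + 2 * q τ - Sp τ - Real.sqrt 3 * Sm τ)
        + 2 * Real.sqrt 3 * C2 τ * V1 τ) ∧
    (∀ τ, deriv C5 τ = C5 τ * (-2 + 2 * q τ - Sp τ + Real.sqrt 3 * Sm τ)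
        + 2 * (C4 τ * Sx τ - C1 τ * V1 τ)) ∧
    (∀ τ, deriv C6 τ = 2 * q τ * C6 τ + 4 * A τ * C3 τ) ∧
    ((C1 τ₀ = 0 ∧ C2 τ₀ = 0 ∧ C3 τ₀ = 0 ∧ C4 τ₀ = 0 ∧ C5 τ₀ = 0 ∧ C6 τ₀ = 0) →
      ∀ τ, C1 τ = 0 ∧ C2 τ = 0 ∧ C3 τ = 0 ∧ C4 τ = 0 ∧ C5 τ = 0 ∧ C6 τ = 0) := by
  have h3 : Real.sqrt 3 ^ 2 = 3 := Real.sq_sqrt (by norm_num)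
  have hC1f : C1 = fun τ => V3 τ * (A τ - Real.sqrt 3 * Nx τ) := funext hC1
  have hC2f : C2 = fun τ => V3 τ * (Np τ - Real.sqrt 3 * Nm τ) := funext hC2
  have hC3f : C3 = fun τ => Sp τ * A τ + Sm τ * Nx τ - Sx τ * Nm τ - Th τ * V1 τ := funext hC3
  have hC4f : C4 = fun τ => S3 τ * (Np τ - Real.sqrt 3 * Nm τ) := funext hC4
  have hC5f : C5 = fun τ => S3 τ * (Nx τ - Real.sqrt 3 * A τ) - 2 * Th τ * V3 τ := funext hC5
  have hC6f : C6 = fun τ => -1 + Om τ + (Th τ) ^ 2 + (V1 τ) ^ 2 + (V3 τ) ^ 2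
      + (Sp τ) ^ 2 + (Sm τ) ^ 2 + (Sx τ) ^ 2 + (S3 τ) ^ 2
      + (A τ) ^ 2 + (Nm τ) ^ 2 + (Nx τ) ^ 2 := funext hC6
  have hqf : q = fun τ => (3 * γ / 2 - 1) * Om τ + 2 * (Th τ) ^ 2
      + 2 * ((Sp τ) ^ 2 + (Sm τ) ^ 2 + (Sx τ) ^ 2 + (S3 τ) ^ 2) := funext hq
  have hC1d : Differentiable ℝ C1 := by rw [hC1f]; fun_prop
  have hC2d : Differentiable ℝ C2 := by rw [hC2f]; fun_prop
  have hC3d : Differentiable ℝ C3 := by rw [hC3f]; fun_prop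
  have hC4d : Differentiable ℝ C4 := by rw [hC4f]; fun_prop
  have hC5d : Differentiable ℝ C5 := by rw [hC5f]; fun_prop
  have hC6d : Differentiable ℝ C6 := by rw [hC6f]; fun_prop
  have key1 : ∀ x, deriv C1 x = C1 x * (2 * q x + Sp x + Real.sqrt 3 * Sm x)
      - 2 * Real.sqrt 3 * C2 x * Sx x := by
    intro x
    have H : HasDerivAt (fun τ => V3 τ * (A τ - Real.sqrt 3 * Nx τ))
        (deriv V3 x * (A x - Real.sqrt 3 * Nx x)
          + V3 x * (deriv A x - Real.sqrt 3 * deriv Nx x)) x :=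
      (hV3d x).hasDerivAt.mul ((hAd x).hasDerivAt.sub
        (HasDerivAt.const_mul (Real.sqrt 3) (hNxd x).hasDerivAt))
    rw [hC1 x, hC2 x, hC1f, H.deriv, hV3 x, hA x, hNx x]
    ring
  have key2 : ∀ x, deriv C2 x = C2 x * (2 * q x + Sp x - Real.sqrt 3 * Sm x) := by
    intro x
    have H : HasDerivAt (fun τ => V3 τ * (Np τ - Real.sqrt 3 * Nm τ))
        (deriv V3 x * (Np x - Real.sqrt 3 * Nm x)
          + V3 x * (deriv Np x - Real.sqrt 3 * deriv Nm x)) x :=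
      (hV3d x).hasDerivAt.mul ((hNpd x).hasDerivAt.sub
        (HasDerivAt.const_mul (Real.sqrt 3) (hNmd x).hasDerivAt))
    rw [hC2 x, hC2f, H.deriv, hV3 x, hNp x, hNm x]
    linear_combination (-2 * Sx x * Nx x * V3 x - 2 * Sm x * Nm x * V3 x) * h3
  have key3 : ∀ x, deriv C3 x = 2 * C3 x * (-1 + q x + Sp x) + C1 x * V3 x
      - Real.sqrt 3 * C5 x * S3 x := by
    intro x
    have H : HasDerivAt (fun τ => Sp τ * A τ + Sm τ * Nx τ - Sx τ * Nm τ - Th τ * V1 τ)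
        (deriv Sp x * A x + Sp x * deriv A x
          + (deriv Sm x * Nx x + Sm x * deriv Nx x)
          - (deriv Sx x * Nm x + Sx x * deriv Nm x)
          - (deriv Th x * V1 x + Th x * deriv V1 x)) x :=
      ((((hSpd x).hasDerivAt.mul (hAd x).hasDerivAt).add
        ((hSmd x).hasDerivAt.mul (hNxd x).hasDerivAt)).sub
        ((hSxd x).hasDerivAt.mul (hNmd x).hasDerivAt)).sub
        ((hThd x).hasDerivAt.mul (hV1d x).hasDerivAt)
    rw [hC3 x, hC1 x, hC5 x, hC3f, H.deriv, hSp x, hA x, hSm x, hNx x, hSx x, hNm x,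
      hTh x, hV1 x]
    linear_combination (-(S3 x ^ 2 * A x)) * h3
  have key4 : ∀ x, deriv C4 x = C4 x * (-2 + 2 * q x - Sp x - Real.sqrt 3 * Sm x)
      + 2 * Real.sqrt 3 * C2 x * V1 x := by
    intro x
    have H : HasDerivAt (fun τ => S3 τ * (Np τ - Real.sqrt 3 * Nm τ))
        (deriv S3 x * (Np x - Real.sqrt 3 * Nm x)
          + S3 x * (deriv Np x - Real.sqrt 3 * deriv Nm x)) x :=
      (hS3d x).hasDerivAt.mul ((hNpd x).hasDerivAt.sub
        (HasDerivAt.const_mul (Real.sqrt 3) (hNmd x).hasDerivAt))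
    rw [hC4 x, hC2 x, hC4f, H.deriv, hS3 x, hNp x, hNm x]
    linear_combination (-2 * Sx x * S3 x * Nx x - 2 * Sm x * S3 x * Nm x) * h3
  have key5 : ∀ x, deriv C5 x = C5 x * (-2 + 2 * q x - Sp x + Real.sqrt 3 * Sm x)
      + 2 * (C4 x * Sx x - C1 x * V1 x) := by
    intro x
    have H : HasDerivAt (fun τ => S3 τ * (Nx τ - Real.sqrt 3 * A τ) - 2 * Th τ * V3 τ)
        (deriv S3 x * (Nx x - Real.sqrt 3 * A x)
          + S3 x * (deriv Nx x - Real.sqrt 3 * deriv A x)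
          - (2 * deriv Th x * V3 x + 2 * Th x * deriv V3 x)) x :=
      ((hS3d x).hasDerivAt.mul ((hNxd x).hasDerivAt.sub
        (HasDerivAt.const_mul (Real.sqrt 3) (hAd x).hasDerivAt))).sub
        ((HasDerivAt.const_mul 2 (hThd x).hasDerivAt).mul (hV3d x).hasDerivAt)
    rw [hC5 x, hC4 x, hC1 x, hC5f, H.deriv, hS3 x, hNx x, hA x, hTh x, hV3 x]
    linear_combination (-2 * A x * V1 x * V3 x) * h3
  have key6 : ∀ x, deriv C6 x = 2 * q x * C6 x + 4 * A x * C3 x := by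
    intro x
    have H := ((((((((((((hOmd x).hasDerivAt.const_add (-1)).add
      ((hThd x).hasDerivAt.pow 2)).add ((hV1d x).hasDerivAt.pow 2)).add
      ((hV3d x).hasDerivAt.pow 2)).add ((hSpd x).hasDerivAt.pow 2)).add
      ((hSmd x).hasDerivAt.pow 2)).add ((hSxd x).hasDerivAt.pow 2)).add
      ((hS3d x).hasDerivAt.pow 2)).add ((hAd x).hasDerivAt.pow 2)).add
      ((hNmd x).hasDerivAt.pow 2)).add ((hNxd x).hasDerivAt.pow 2))
    rw [hC6 x, hC3 x, hC6f, HasDerivAt.deriv (f := fun τ => -1 + Om τ + (Th τ) ^ 2 + (V1 τ) ^ 2 + (V3 τ) ^ 2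
        + (Sp τ) ^ 2 + (Sm τ) ^ 2 + (Sx τ) ^ 2 + (S3 τ) ^ 2
        + (A τ) ^ 2 + (Nm τ) ^ 2 + (Nx τ) ^ 2) H, hOm x, hTh x, hV1 x, hV3 x, hSp x, hSm x, hSx x,
      hS3 x, hA x, hNm x, hNx x]
    push_cast
    linear_combination 2 * hq x
  have hd1 : ∀ x, HasDerivAt C1 (C1 x * (2 * q x + Sp x + Real.sqrt 3 * Sm x)
      - 2 * Real.sqrt 3 * C2 x * Sx x) x := by
    intro x; have h := (hC1d x).hasDerivAt; rwa [key1 x] at h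
  have hd2 : ∀ x, HasDerivAt C2 (C2 x * (2 * q x + Sp x - Real.sqrt 3 * Sm x)) x := by
    intro x; have h := (hC2d x).hasDerivAt; rwa [key2 x] at h
  have hd3 : ∀ x, HasDerivAt C3 (2 * C3 x * (-1 + q x + Sp x) + C1 x * V3 x
      - Real.sqrt 3 * C5 x * S3 x) x := by
    intro x; have h := (hC3d x).hasDerivAt; rwa [key3 x] at h
  have hd4 : ∀ x, HasDerivAt C4 (C4 x * (-2 + 2 * q x - Sp x - Real.sqrt 3 * Sm x)
      + 2 * Real.sqrt 3 * C2 x * V1 x) x := by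
    intro x; have h := (hC4d x).hasDerivAt; rwa [key4 x] at h
  have hd5 : ∀ x, HasDerivAt C5 (C5 x * (-2 + 2 * q x - Sp x + Real.sqrt 3 * Sm x)
      + 2 * (C4 x * Sx x - C1 x * V1 x)) x := by
    intro x; have h := (hC5d x).hasDerivAt; rwa [key5 x] at h
  have hd6 : ∀ x, HasDerivAt C6 (2 * q x * C6 x + 4 * A x * C3 x) x := by
    intro x; have h := (hC6d x).hasDerivAt; rwa [key6 x] at h
  have hqc : Continuous q := by
    rw [hqf]
    exact Differentiable.continuous (𝕜 := ℝ) (by fun_prop)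
  refine ⟨key1, key2, key3, key4, key5, key6, ?_⟩
  rintro ⟨hz1, hz2, hz3, hz4, hz5, hz6⟩ τ
  have hFder : ∀ x, HasDerivAt
      (fun t => C1 t * C1 t + C2 t * C2 t + C3 t * C3 t + C4 t * C4 t + C5 t * C5 t
        + C6 t * C6 t)
      (2 * C1 x * (C1 x * (2 * q x + Sp x + Real.sqrt 3 * Sm x) - 2 * Real.sqrt 3 * C2 x * Sx x) + 2 * C2 x * (C2 x * (2 * q x + Sp x - Real.sqrt 3 * Sm x)) + 2 * C3 x * (2 * C3 x * (-1 + q x + Sp x) + C1 x * V3 x - Real.sqrt 3 * C5 x * S3 x) + 2 * C4 x * (C4 x * (-2 + 2 * q x - Sp x - Real.sqrt 3 * Sm x) + 2 * Real.sqrt 3 * C2 x * V1 x) + 2 * C5 x * (C5 x * (-2 + 2 * q x - Sp x + Real.sqrt 3 * Sm x) + 2 * (C4 x * Sx x - C1 x * V1 x)) + 2 * C6 x * (2 * q x * C6 x + 4 * A x * C3 x)) x := by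
    intro x
    have heq : (2 * C1 x * (C1 x * (2 * q x + Sp x + Real.sqrt 3 * Sm x) - 2 * Real.sqrt 3 * C2 x * Sx x) + 2 * C2 x * (C2 x * (2 * q x + Sp x - Real.sqrt 3 * Sm x)) + 2 * C3 x * (2 * C3 x * (-1 + q x + Sp x) + C1 x * V3 x - Real.sqrt 3 * C5 x * S3 x) + 2 * C4 x * (C4 x * (-2 + 2 * q x - Sp x - Real.sqrt 3 * Sm x) + 2 * Real.sqrt 3 * C2 x * V1 x) + 2 * C5 x * (C5 x * (-2 + 2 * q x - Sp x + Real.sqrt 3 * Sm x) + 2 * (C4 x * Sx x - C1 x * V1 x)) + 2 * C6 x * (2 * q x * C6 x + 4 * A x * C3 x))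
        = (deriv C1 x * C1 x + C1 x * deriv C1 x)
        + (deriv C2 x * C2 x + C2 x * deriv C2 x)
        + (deriv C3 x * C3 x + C3 x * deriv C3 x)
        + (deriv C4 x * C4 x + C4 x * deriv C4 x)
        + (deriv C5 x * C5 x + C5 x * deriv C5 x)
        + (deriv C6 x * C6 x + C6 x * deriv C6 x) := by
      rw [key1 x, key2 x, key3 x, key4 x, key5 x, key6 x]; ring
    rw [heq]
    exact ((((((hC1d x).hasDerivAt.mul (hC1d x).hasDerivAt).add
      ((hC2d x).hasDerivAt.mul (hC2d x).hasDerivAt)).add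
      ((hC3d x).hasDerivAt.mul (hC3d x).hasDerivAt)).add
      ((hC4d x).hasDerivAt.mul (hC4d x).hasDerivAt)).add
      ((hC5d x).hasDerivAt.mul (hC5d x).hasDerivAt)).add
      ((hC6d x).hasDerivAt.mul (hC6d x).hasDerivAt)
  have hb : ∀ x, |2 * C1 x * (C1 x * (2 * q x + Sp x + Real.sqrt 3 * Sm x) - 2 * Real.sqrt 3 * C2 x * Sx x) + 2 * C2 x * (C2 x * (2 * q x + Sp x - Real.sqrt 3 * Sm x)) + 2 * C3 x * (2 * C3 x * (-1 + q x + Sp x) + C1 x * V3 x - Real.sqrt 3 * C5 x * S3 x) + 2 * C4 x * (C4 x * (-2 + 2 * q x - Sp x - Real.sqrt 3 * Sm x) + 2 * Real.sqrt 3 * C2 x * V1 x) + 2 * C5 x * (C5 x * (-2 + 2 * q x - Sp x + Real.sqrt 3 * Sm x) + 2 * (C4 x * Sx x - C1 x * V1 x)) + 2 * C6 x * (2 * q x * C6 x + 4 * A x * C3 x)| ≤ (((2 * q x + Sp x + Real.sqrt 3 * Sm x) ^ 2 + 1) + ((2 * q x + Sp x - Real.sqrt 3 * Sm x) ^ 2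 + 1) + ((2 * (-1 + q x + Sp x)) ^ 2 + 1) + ((-2 + 2 * q x - Sp x - Real.sqrt 3 * Sm x) ^ 2 + 1) + ((-2 + 2 * q x - Sp x + Real.sqrt 3 * Sm x) ^ 2 + 1) + ((2 * q x) ^ 2 + 1) + ((-2 * Real.sqrt 3 * Sx x) ^ 2 + 1) + ((V3 x) ^ 2 + 1) + ((-Real.sqrt 3 * S3 x) ^ 2 + 1) + ((2 * Real.sqrt 3 * V1 x) ^ 2 + 1) + ((2 * Sx x) ^ 2 + 1) + ((-2 * V1 x) ^ 2 + 1) + ((4 * A x) ^ 2 + 1)) * (C1 x * C1 x + C2 x * C2 x + C3 x * C3 x + C4 x * C4 x + C5 x * C5 x + C6 x * C6 x) := by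
    intro x
    have p1 : 2 * (2 * q x + Sp x + Real.sqrt 3 * Sm x) * C1 x * C1 x ≤ ((2 * q x + Sp x + Real.sqrt 3 * Sm x) ^ 2 + 1) * (C1 x * C1 x + C2 x * C2 x + C3 x * C3 x + C4 x * C4 x + C5 x * C5 x + C6 x * C6 x) := by
      linarith [sq_nonneg ((2 * q x + Sp x + Real.sqrt 3 * Sm x) * C1 x - C1 x), sq_nonneg ((2 * q x + Sp x + Real.sqrt 3 * Sm x) * C1 x), sq_nonneg (C1 x), sq_nonneg ((2 * q x + Sp x + Real.sqrt 3 * Sm x) * C2 x), sq_nonneg (C2 x), sq_nonneg ((2 * q x + Sp x + Real.sqrt 3 * Sm x) * C3 x), sq_nonneg (C3 x), sq_nonneg ((2 * q x + Sp x + Real.sqrt 3 * Sm x) * C4 x), sq_nonneg (C4 x), sq_nonneg ((2 * q x + Sp x + Real.sqrt 3 * Sm x) * C5 x), sq_nonneg (C5 x), sq_nonneg ((2 * q x + Sp x + Real.sqrt 3 * Sm x) * C6 x), sq_nonneg (C6 x)]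
    have p2 : 2 * (2 * q x + Sp x - Real.sqrt 3 * Sm x) * C2 x * C2 x ≤ ((2 * q x + Sp x - Real.sqrt 3 * Sm x) ^ 2 + 1) * (C1 x * C1 x + C2 x * C2 x + C3 x * C3 x + C4 x * C4 x + C5 x * C5 x + C6 x * C6 x) := by
      linarith [sq_nonneg ((2 * q x + Sp x - Real.sqrt 3 * Sm x) * C2 x - C2 x), sq_nonneg ((2 * q x + Sp x - Real.sqrt 3 * Sm x) * C1 x), sq_nonneg (C1 x), sq_nonneg ((2 * q x + Sp x - Real.sqrt 3 * Sm x) * C2 x), sq_nonneg (C2 x), sq_nonneg ((2 * q x + Sp x - Real.sqrt 3 * Sm x) * C3 x), sq_nonneg (C3 x), sq_nonneg ((2 * q x + Sp x - Real.sqrt 3 * Sm x) * C4 x), sq_nonneg (C4 x), sq_nonneg ((2 * q x + Sp x - Real.sqrt 3 * Sm x) * C5 x), sq_nonneg (C5 x), sq_nonneg ((2 * q x + Sp x - Real.sqrt 3 * Sm x) * C6 x), sq_nonneg (C6 x)]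
    have p3 : 2 * (2 * (-1 + q x + Sp x)) * C3 x * C3 x ≤ ((2 * (-1 + q x + Sp x)) ^ 2 + 1) * (C1 x * C1 x + C2 x * C2 x + C3 x * C3 x + C4 x * C4 x + C5 x * C5 x + C6 x * C6 x) := by
      linarith [sq_nonneg ((2 * (-1 + q x + Sp x)) * C3 x - C3 x), sq_nonneg ((2 * (-1 + q x + Sp x)) * C1 x), sq_nonneg (C1 x), sq_nonneg ((2 * (-1 + q x + Sp x)) * C2 x), sq_nonneg (C2 x), sq_nonneg ((2 * (-1 + q x + Sp x)) * C3 x), sq_nonneg (C3 x), sq_nonneg ((2 * (-1 + q x + Sp x)) * C4 x), sq_nonneg (C4 x), sq_nonneg ((2 * (-1 + q x + Sp x)) * C5 x), sq_nonneg (C5 x), sq_nonneg ((2 * (-1 + q x + Sp x)) * C6 x), sq_nonneg (C6 x)]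
    have p4 : 2 * (-2 + 2 * q x - Sp x - Real.sqrt 3 * Sm x) * C4 x * C4 x ≤ ((-2 + 2 * q x - Sp x - Real.sqrt 3 * Sm x) ^ 2 + 1) * (C1 x * C1 x + C2 x * C2 x + C3 x * C3 x + C4 x * C4 x + C5 x * C5 x + C6 x * C6 x) := by
      linarith [sq_nonneg ((-2 + 2 * q x - Sp x - Real.sqrt 3 * Sm x) * C4 x - C4 x), sq_nonneg ((-2 + 2 * q x - Sp x - Real.sqrt 3 * Sm x) * C1 x), sq_nonneg (C1 x), sq_nonneg ((-2 + 2 * q x - Sp x - Real.sqrt 3 * Sm x) * C2 x), sq_nonneg (C2 x), sq_nonneg ((-2 + 2 * q x - Sp x - Real.sqrt 3 * Sm x) * C3 x), sq_nonneg (C3 x), sq_nonneg ((-2 + 2 * q x - Sp x - Real.sqrt 3 * Sm x) * C4 x), sq_nonneg (C4 x), sq_nonneg ((-2 + 2 * q x - Sp x - Real.sqrt 3 * Sm x) * C5 x), sq_nonneg (C5 x), sq_nonneg ((-2 + 2 * q x - Sp x - Real.sqrt 3 * Sm x) * C6 x), sq_nonneg (C6 x)]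
    have p5 : 2 * (-2 + 2 * q x - Sp x + Real.sqrt 3 * Sm x) * C5 x * C5 x ≤ ((-2 + 2 * q x - Sp x + Real.sqrt 3 * Sm x) ^ 2 + 1) * (C1 x * C1 x + C2 x * C2 x + C3 x * C3 x + C4 x * C4 x + C5 x * C5 x + C6 x * C6 x) := by
      linarith [sq_nonneg ((-2 + 2 * q x - Sp x + Real.sqrt 3 * Sm x) * C5 x - C5 x), sq_nonneg ((-2 + 2 * q x - Sp x + Real.sqrt 3 * Sm x) * C1 x), sq_nonneg (C1 x), sq_nonneg ((-2 + 2 * q x - Sp x + Real.sqrt 3 * Sm x) * C2 x), sq_nonneg (C2 x), sq_nonneg ((-2 + 2 * q x - Sp x + Real.sqrt 3 * Sm x) * C3 x), sq_nonneg (C3 x), sq_nonneg ((-2 + 2 * q x - Sp x + Real.sqrt 3 * Sm x) * C4 x), sq_nonneg (C4 x), sq_nonneg ((-2 + 2 * q x - Sp x + Real.sqrt 3 * Sm x) * C5 x), sq_nonneg (C5 x), sq_nonneg ((-2 + 2 * q x - Sp x + Real.sqrt 3 * Sm x) * C6 x), sq_nonneg (C6 x)]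
    have p6 : 2 * (2 * q x) * C6 x * C6 x ≤ ((2 * q x) ^ 2 + 1) * (C1 x * C1 x + C2 x * C2 x + C3 x * C3 x + C4 x * C4 x + C5 x * C5 x + C6 x * C6 x) := by
      linarith [sq_nonneg ((2 * q x) * C6 x - C6 x), sq_nonneg ((2 * q x) * C1 x), sq_nonneg (C1 x), sq_nonneg ((2 * q x) * C2 x), sq_nonneg (C2 x), sq_nonneg ((2 * q x) * C3 x), sq_nonneg (C3 x), sq_nonneg ((2 * q x) * C4 x), sq_nonneg (C4 x), sq_nonneg ((2 * q x) * C5 x), sq_nonneg (C5 x), sq_nonneg ((2 * q x) * C6 x), sq_nonneg (C6 x)]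
    have p7 : 2 * (-2 * Real.sqrt 3 * Sx x) * C1 x * C2 x ≤ ((-2 * Real.sqrt 3 * Sx x) ^ 2 + 1) * (C1 x * C1 x + C2 x * C2 x + C3 x * C3 x + C4 x * C4 x + C5 x * C5 x + C6 x * C6 x) := by
      linarith [sq_nonneg ((-2 * Real.sqrt 3 * Sx x) * C1 x - C2 x), sq_nonneg ((-2 * Real.sqrt 3 * Sx x) * C1 x), sq_nonneg (C1 x), sq_nonneg ((-2 * Real.sqrt 3 * Sx x) * C2 x), sq_nonneg (C2 x), sq_nonneg ((-2 * Real.sqrt 3 * Sx x) * C3 x), sq_nonneg (C3 x), sq_nonneg ((-2 * Real.sqrt 3 * Sx x) * C4 x), sq_nonneg (C4 x), sq_nonneg ((-2 * Real.sqrt 3 * Sx x) * C5 x), sq_nonneg (C5 x), sq_nonneg ((-2 * Real.sqrt 3 * Sx x) * C6 x), sq_nonneg (C6 x)]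
    have p8 : 2 * (V3 x) * C1 x * C3 x ≤ ((V3 x) ^ 2 + 1) * (C1 x * C1 x + C2 x * C2 x + C3 x * C3 x + C4 x * C4 x + C5 x * C5 x + C6 x * C6 x) := by
      linarith [sq_nonneg ((V3 x) * C1 x - C3 x), sq_nonneg ((V3 x) * C1 x), sq_nonneg (C1 x), sq_nonneg ((V3 x) * C2 x), sq_nonneg (C2 x), sq_nonneg ((V3 x) * C3 x), sq_nonneg (C3 x), sq_nonneg ((V3 x) * C4 x), sq_nonneg (C4 x), sq_nonneg ((V3 x) * C5 x), sq_nonneg (C5 x), sq_nonneg ((V3 x) * C6 x), sq_nonneg (C6 x)]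
    have p9 : 2 * (-Real.sqrt 3 * S3 x) * C3 x * C5 x ≤ ((-Real.sqrt 3 * S3 x) ^ 2 + 1) * (C1 x * C1 x + C2 x * C2 x + C3 x * C3 x + C4 x * C4 x + C5 x * C5 x + C6 x * C6 x) := by
      linarith [sq_nonneg ((-Real.sqrt 3 * S3 x) * C3 x - C5 x), sq_nonneg ((-Real.sqrt 3 * S3 x) * C1 x), sq_nonneg (C1 x), sq_nonneg ((-Real.sqrt 3 * S3 x) * C2 x), sq_nonneg (C2 x), sq_nonneg ((-Real.sqrt 3 * S3 x) * C3 x), sq_nonneg (C3 x), sq_nonneg ((-Real.sqrt 3 * S3 x) * C4 x), sq_nonneg (C4 x), sq_nonneg ((-Real.sqrt 3 * S3 x) * C5 x), sq_nonneg (C5 x), sq_nonneg ((-Real.sqrt 3 * S3 x) * C6 x), sq_nonneg (C6 x)]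
    have p10 : 2 * (2 * Real.sqrt 3 * V1 x) * C2 x * C4 x ≤ ((2 * Real.sqrt 3 * V1 x) ^ 2 + 1) * (C1 x * C1 x + C2 x * C2 x + C3 x * C3 x + C4 x * C4 x + C5 x * C5 x + C6 x * C6 x) := by
      linarith [sq_nonneg ((2 * Real.sqrt 3 * V1 x) * C2 x - C4 x), sq_nonneg ((2 * Real.sqrt 3 * V1 x) * C1 x), sq_nonneg (C1 x), sq_nonneg ((2 * Real.sqrt 3 * V1 x) * C2 x), sq_nonneg (C2 x), sq_nonneg ((2 * Real.sqrt 3 * V1 x) * C3 x), sq_nonneg (C3 x), sq_nonneg ((2 * Real.sqrt 3 * V1 x) * C4 x), sq_nonneg (C4 x), sq_nonneg ((2 * Real.sqrt 3 * V1 x) * C5 x), sq_nonneg (C5 x), sq_nonneg ((2 * Real.sqrt 3 * V1 x) * C6 x), sq_nonneg (C6 x)]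
    have p11 : 2 * (2 * Sx x) * C4 x * C5 x ≤ ((2 * Sx x) ^ 2 + 1) * (C1 x * C1 x + C2 x * C2 x + C3 x * C3 x + C4 x * C4 x + C5 x * C5 x + C6 x * C6 x) := by
      linarith [sq_nonneg ((2 * Sx x) * C4 x - C5 x), sq_nonneg ((2 * Sx x) * C1 x), sq_nonneg (C1 x), sq_nonneg ((2 * Sx x) * C2 x), sq_nonneg (C2 x), sq_nonneg ((2 * Sx x) * C3 x), sq_nonneg (C3 x), sq_nonneg ((2 * Sx x) * C4 x), sq_nonneg (C4 x), sq_nonneg ((2 * Sx x) * C5 x), sq_nonneg (C5 x), sq_nonneg ((2 * Sx x) * C6 x), sq_nonneg (C6 x)]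
    have p12 : 2 * (-2 * V1 x) * C1 x * C5 x ≤ ((-2 * V1 x) ^ 2 + 1) * (C1 x * C1 x + C2 x * C2 x + C3 x * C3 x + C4 x * C4 x + C5 x * C5 x + C6 x * C6 x) := by
      linarith [sq_nonneg ((-2 * V1 x) * C1 x - C5 x), sq_nonneg ((-2 * V1 x) * C1 x), sq_nonneg (C1 x), sq_nonneg ((-2 * V1 x) * C2 x), sq_nonneg (C2 x), sq_nonneg ((-2 * V1 x) * C3 x), sq_nonneg (C3 x), sq_nonneg ((-2 * V1 x) * C4 x), sq_nonneg (C4 x), sq_nonneg ((-2 * V1 x) * C5 x), sq_nonneg (C5 x), sq_nonneg ((-2 * V1 x) * C6 x), sq_nonneg (C6 x)]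
    have p13 : 2 * (4 * A x) * C3 x * C6 x ≤ ((4 * A x) ^ 2 + 1) * (C1 x * C1 x + C2 x * C2 x + C3 x * C3 x + C4 x * C4 x + C5 x * C5 x + C6 x * C6 x) := by
      linarith [sq_nonneg ((4 * A x) * C3 x - C6 x), sq_nonneg ((4 * A x) * C1 x), sq_nonneg (C1 x), sq_nonneg ((4 * A x) * C2 x), sq_nonneg (C2 x), sq_nonneg ((4 * A x) * C3 x), sq_nonneg (C3 x), sq_nonneg ((4 * A x) * C4 x), sq_nonneg (C4 x), sq_nonneg ((4 * A x) * C5 x), sq_nonneg (C5 x), sq_nonneg ((4 * A x) * C6 x), sq_nonneg (C6 x)]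
    have n1 : -(((2 * q x + Sp x + Real.sqrt 3 * Sm x) ^ 2 + 1) * (C1 x * C1 x + C2 x * C2 x + C3 x * C3 x + C4 x * C4 x + C5 x * C5 x + C6 x * C6 x)) ≤ 2 * (2 * q x + Sp x + Real.sqrt 3 * Sm x) * C1 x * C1 x := by
      linarith [sq_nonneg ((2 * q x + Sp x + Real.sqrt 3 * Sm x) * C1 x + C1 x), sq_nonneg ((2 * q x + Sp x + Real.sqrt 3 * Sm x) * C1 x), sq_nonneg (C1 x), sq_nonneg ((2 * q x + Sp x + Real.sqrt 3 * Sm x) * C2 x), sq_nonneg (C2 x), sq_nonneg ((2 * q x + Sp x + Real.sqrt 3 * Sm x) * C3 x), sq_nonneg (C3 x), sq_nonneg ((2 * q x + Sp x + Real.sqrt 3 * Sm x) * C4 x), sq_nonneg (C4 x), sq_nonneg ((2 * q x + Sp x + Real.sqrt 3 * Sm x) * C5 x), sq_nonneg (C5 x), sq_nonneg ((2 * q x + Sp x + Real.sqrt 3 * Sm x) * C6 x), sq_nonneg (C6 x)]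
    have n2 : -(((2 * q x + Sp x - Real.sqrt 3 * Sm x) ^ 2 + 1) * (C1 x * C1 x + C2 x * C2 x + C3 x * C3 x + C4 x * C4 x + C5 x * C5 x + C6 x * C6 x)) ≤ 2 * (2 * q x + Sp x - Real.sqrt 3 * Sm x) * C2 x * C2 x := by
      linarith [sq_nonneg ((2 * q x + Sp x - Real.sqrt 3 * Sm x) * C2 x + C2 x), sq_nonneg ((2 * q x + Sp x - Real.sqrt 3 * Sm x) * C1 x), sq_nonneg (C1 x), sq_nonneg ((2 * q x + Sp x - Real.sqrt 3 * Sm x) * C2 x), sq_nonneg (C2 x), sq_nonneg ((2 * q x + Sp x - Real.sqrt 3 * Sm x) * C3 x), sq_nonneg (C3 x), sq_nonneg ((2 * q x + Sp x - Real.sqrt 3 * Sm x) * C4 x), sq_nonneg (C4 x), sq_nonneg ((2 * q x + Sp x - Real.sqrt 3 * Sm x) * C5 x), sq_nonneg (C5 x), sq_nonneg ((2 * q x + Sp x - Real.sqrt 3 * Sm x) * C6 x), sq_nonneg (C6 x)]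
    have n3 : -(((2 * (-1 + q x + Sp x)) ^ 2 + 1) * (C1 x * C1 x + C2 x * C2 x + C3 x * C3 x + C4 x * C4 x + C5 x * C5 x + C6 x * C6 x)) ≤ 2 * (2 * (-1 + q x + Sp x)) * C3 x * C3 x := by
      linarith [sq_nonneg ((2 * (-1 + q x + Sp x)) * C3 x + C3 x), sq_nonneg ((2 * (-1 + q x + Sp x)) * C1 x), sq_nonneg (C1 x), sq_nonneg ((2 * (-1 + q x + Sp x)) * C2 x), sq_nonneg (C2 x), sq_nonneg ((2 * (-1 + q x + Sp x)) * C3 x), sq_nonneg (C3 x), sq_nonneg ((2 * (-1 + q x + Sp x)) * C4 x), sq_nonneg (C4 x), sq_nonneg ((2 * (-1 + q x + Sp x)) * C5 x), sq_nonneg (C5 x), sq_nonneg ((2 * (-1 + q x + Sp x)) * C6 x), sq_nonneg (C6 x)]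
    have n4 : -(((-2 + 2 * q x - Sp x - Real.sqrt 3 * Sm x) ^ 2 + 1) * (C1 x * C1 x + C2 x * C2 x + C3 x * C3 x + C4 x * C4 x + C5 x * C5 x + C6 x * C6 x)) ≤ 2 * (-2 + 2 * q x - Sp x - Real.sqrt 3 * Sm x) * C4 x * C4 x := by
      linarith [sq_nonneg ((-2 + 2 * q x - Sp x - Real.sqrt 3 * Sm x) * C4 x + C4 x), sq_nonneg ((-2 + 2 * q x - Sp x - Real.sqrt 3 * Sm x) * C1 x), sq_nonneg (C1 x), sq_nonneg ((-2 + 2 * q x - Sp x - Real.sqrt 3 * Sm x) * C2 x), sq_nonneg (C2 x), sq_nonneg ((-2 + 2 * q x - Sp x - Real.sqrt 3 * Sm x) * C3 x), sq_nonneg (C3 x), sq_nonneg ((-2 + 2 * q x - Sp x - Real.sqrt 3 * Sm x) * C4 x), sq_nonneg (C4 x), sq_nonneg ((-2 + 2 * q x - Sp x - Real.sqrt 3 * Sm x) * C5 x), sq_nonneg (C5 x), sq_nonneg ((-2 + 2 * q x - Sp x - Real.sqrt 3 * Sm x) * C6 x), sq_nonneg (C6 x)]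
    have n5 : -(((-2 + 2 * q x - Sp x + Real.sqrt 3 * Sm x) ^ 2 + 1) * (C1 x * C1 x + C2 x * C2 x + C3 x * C3 x + C4 x * C4 x + C5 x * C5 x + C6 x * C6 x)) ≤ 2 * (-2 + 2 * q x - Sp x + Real.sqrt 3 * Sm x) * C5 x * C5 x := by
      linarith [sq_nonneg ((-2 + 2 * q x - Sp x + Real.sqrt 3 * Sm x) * C5 x + C5 x), sq_nonneg ((-2 + 2 * q x - Sp x + Real.sqrt 3 * Sm x) * C1 x), sq_nonneg (C1 x), sq_nonneg ((-2 + 2 * q x - Sp x + Real.sqrt 3 * Sm x) * C2 x), sq_nonneg (C2 x), sq_nonneg ((-2 + 2 * q x - Sp x + Real.sqrt 3 * Sm x) * C3 x), sq_nonneg (C3 x), sq_nonneg ((-2 + 2 * q x - Sp x + Real.sqrt 3 * Sm x) * C4 x), sq_nonneg (C4 x), sq_nonneg ((-2 + 2 * q x - Sp x + Real.sqrt 3 * Sm x) * C5 x), sq_nonneg (C5 x), sq_nonneg ((-2 + 2 * q x - Sp x + Real.sqrt 3 * Sm x) * C6 x), sq_nonneg (C6 x)]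
    have n6 : -(((2 * q x) ^ 2 + 1) * (C1 x * C1 x + C2 x * C2 x + C3 x * C3 x + C4 x * C4 x + C5 x * C5 x + C6 x * C6 x)) ≤ 2 * (2 * q x) * C6 x * C6 x := by
      linarith [sq_nonneg ((2 * q x) * C6 x + C6 x), sq_nonneg ((2 * q x) * C1 x), sq_nonneg (C1 x), sq_nonneg ((2 * q x) * C2 x), sq_nonneg (C2 x), sq_nonneg ((2 * q x) * C3 x), sq_nonneg (C3 x), sq_nonneg ((2 * q x) * C4 x), sq_nonneg (C4 x), sq_nonneg ((2 * q x) * C5 x), sq_nonneg (C5 x), sq_nonneg ((2 * q x) * C6 x), sq_nonneg (C6 x)]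
    have n7 : -(((-2 * Real.sqrt 3 * Sx x) ^ 2 + 1) * (C1 x * C1 x + C2 x * C2 x + C3 x * C3 x + C4 x * C4 x + C5 x * C5 x + C6 x * C6 x)) ≤ 2 * (-2 * Real.sqrt 3 * Sx x) * C1 x * C2 x := by
      linarith [sq_nonneg ((-2 * Real.sqrt 3 * Sx x) * C1 x + C2 x), sq_nonneg ((-2 * Real.sqrt 3 * Sx x) * C1 x), sq_nonneg (C1 x), sq_nonneg ((-2 * Real.sqrt 3 * Sx x) * C2 x), sq_nonneg (C2 x), sq_nonneg ((-2 * Real.sqrt 3 * Sx x) * C3 x), sq_nonneg (C3 x), sq_nonneg ((-2 * Real.sqrt 3 * Sx x) * C4 x), sq_nonneg (C4 x), sq_nonneg ((-2 * Real.sqrt 3 * Sx x) * C5 x), sq_nonneg (C5 x), sq_nonneg ((-2 * Real.sqrt 3 * Sx x) * C6 x), sq_nonneg (C6 x)]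
    have n8 : -(((V3 x) ^ 2 + 1) * (C1 x * C1 x + C2 x * C2 x + C3 x * C3 x + C4 x * C4 x + C5 x * C5 x + C6 x * C6 x)) ≤ 2 * (V3 x) * C1 x * C3 x := by
      linarith [sq_nonneg ((V3 x) * C1 x + C3 x), sq_nonneg ((V3 x) * C1 x), sq_nonneg (C1 x), sq_nonneg ((V3 x) * C2 x), sq_nonneg (C2 x), sq_nonneg ((V3 x) * C3 x), sq_nonneg (C3 x), sq_nonneg ((V3 x) * C4 x), sq_nonneg (C4 x), sq_nonneg ((V3 x) * C5 x), sq_nonneg (C5 x), sq_nonneg ((V3 x) * C6 x), sq_nonneg (C6 x)]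
    have n9 : -(((-Real.sqrt 3 * S3 x) ^ 2 + 1) * (C1 x * C1 x + C2 x * C2 x + C3 x * C3 x + C4 x * C4 x + C5 x * C5 x + C6 x * C6 x)) ≤ 2 * (-Real.sqrt 3 * S3 x) * C3 x * C5 x := by
      linarith [sq_nonneg ((-Real.sqrt 3 * S3 x) * C3 x + C5 x), sq_nonneg ((-Real.sqrt 3 * S3 x) * C1 x), sq_nonneg (C1 x), sq_nonneg ((-Real.sqrt 3 * S3 x) * C2 x), sq_nonneg (C2 x), sq_nonneg ((-Real.sqrt 3 * S3 x) * C3 x), sq_nonneg (C3 x), sq_nonneg ((-Real.sqrt 3 * S3 x) * C4 x), sq_nonneg (C4 x), sq_nonneg ((-Real.sqrt 3 * S3 x) * C5 x), sq_nonneg (C5 x), sq_nonneg ((-Real.sqrt 3 * S3 x) * C6 x), sq_nonneg (C6 x)]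
    have n10 : -(((2 * Real.sqrt 3 * V1 x) ^ 2 + 1) * (C1 x * C1 x + C2 x * C2 x + C3 x * C3 x + C4 x * C4 x + C5 x * C5 x + C6 x * C6 x)) ≤ 2 * (2 * Real.sqrt 3 * V1 x) * C2 x * C4 x := by
      linarith [sq_nonneg ((2 * Real.sqrt 3 * V1 x) * C2 x + C4 x), sq_nonneg ((2 * Real.sqrt 3 * V1 x) * C1 x), sq_nonneg (C1 x), sq_nonneg ((2 * Real.sqrt 3 * V1 x) * C2 x), sq_nonneg (C2 x), sq_nonneg ((2 * Real.sqrt 3 * V1 x) * C3 x), sq_nonneg (C3 x), sq_nonneg ((2 * Real.sqrt 3 * V1 x) * C4 x), sq_nonneg (C4 x), sq_nonneg ((2 * Real.sqrt 3 * V1 x) * C5 x), sq_nonneg (C5 x), sq_nonneg ((2 * Real.sqrt 3 * V1 x) * C6 x), sq_nonneg (C6 x)]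
    have n11 : -(((2 * Sx x) ^ 2 + 1) * (C1 x * C1 x + C2 x * C2 x + C3 x * C3 x + C4 x * C4 x + C5 x * C5 x + C6 x * C6 x)) ≤ 2 * (2 * Sx x) * C4 x * C5 x := by
      linarith [sq_nonneg ((2 * Sx x) * C4 x + C5 x), sq_nonneg ((2 * Sx x) * C1 x), sq_nonneg (C1 x), sq_nonneg ((2 * Sx x) * C2 x), sq_nonneg (C2 x), sq_nonneg ((2 * Sx x) * C3 x), sq_nonneg (C3 x), sq_nonneg ((2 * Sx x) * C4 x), sq_nonneg (C4 x), sq_nonneg ((2 * Sx x) * C5 x), sq_nonneg (C5 x), sq_nonneg ((2 * Sx x) * C6 x), sq_nonneg (C6 x)]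
    have n12 : -(((-2 * V1 x) ^ 2 + 1) * (C1 x * C1 x + C2 x * C2 x + C3 x * C3 x + C4 x * C4 x + C5 x * C5 x + C6 x * C6 x)) ≤ 2 * (-2 * V1 x) * C1 x * C5 x := by
      linarith [sq_nonneg ((-2 * V1 x) * C1 x + C5 x), sq_nonneg ((-2 * V1 x) * C1 x), sq_nonneg (C1 x), sq_nonneg ((-2 * V1 x) * C2 x), sq_nonneg (C2 x), sq_nonneg ((-2 * V1 x) * C3 x), sq_nonneg (C3 x), sq_nonneg ((-2 * V1 x) * C4 x), sq_nonneg (C4 x), sq_nonneg ((-2 * V1 x) * C5 x), sq_nonneg (C5 x), sq_nonneg ((-2 * V1 x) * C6 x), sq_nonneg (C6 x)]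
    have n13 : -(((4 * A x) ^ 2 + 1) * (C1 x * C1 x + C2 x * C2 x + C3 x * C3 x + C4 x * C4 x + C5 x * C5 x + C6 x * C6 x)) ≤ 2 * (4 * A x) * C3 x * C6 x := by
      linarith [sq_nonneg ((4 * A x) * C3 x + C6 x), sq_nonneg ((4 * A x) * C1 x), sq_nonneg (C1 x), sq_nonneg ((4 * A x) * C2 x), sq_nonneg (C2 x), sq_nonneg ((4 * A x) * C3 x), sq_nonneg (C3 x), sq_nonneg ((4 * A x) * C4 x), sq_nonneg (C4 x), sq_nonneg ((4 * A x) * C5 x), sq_nonneg (C5 x), sq_nonneg ((4 * A x) * C6 x), sq_nonneg (C6 x)]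
    rw [abs_le]
    constructor
    · linarith [n1, n2, n3, n4, n5, n6, n7, n8, n9, n10, n11, n12, n13]
    · linarith [p1, p2, p3, p4, p5, p6, p7, p8, p9, p10, p11, p12, p13]
  have hpos : ∀ x, (0:ℝ) ≤ C1 x * C1 x + C2 x * C2 x + C3 x * C3 x + C4 x * C4 x + C5 x * C5 x + C6 x * C6 x := by
    intro x
    nlinarith [mul_self_nonneg (C1 x), mul_self_nonneg (C2 x), mul_self_nonneg (C3 x),
      mul_self_nonneg (C4 x), mul_self_nonneg (C5 x), mul_self_nonneg (C6 x)]
  have hF0 : C1 τ₀ * C1 τ₀ + C2 τ₀ * C2 τ₀ + C3 τ₀ * C3 τ₀ + C4 τ₀ * C4 τ₀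
      + C5 τ₀ * C5 τ₀ + C6 τ₀ * C6 τ₀ = 0 := by
    rw [hz1, hz2, hz3, hz4, hz5, hz6]; ring
  have hKc : Continuous (fun x => ((2 * q x + Sp x + Real.sqrt 3 * Sm x) ^ 2 + 1) + ((2 * q x + Sp x - Real.sqrt 3 * Sm x) ^ 2 + 1) + ((2 * (-1 + q x + Sp x)) ^ 2 + 1) + ((-2 + 2 * q x - Sp x - Real.sqrt 3 * Sm x) ^ 2 + 1) + ((-2 + 2 * q x - Sp x + Real.sqrt 3 * Sm x) ^ 2 + 1) + ((2 * q x) ^ 2 + 1) + ((-2 * Real.sqrt 3 * Sx x) ^ 2 + 1) + ((V3 x) ^ 2 + 1) + ((-Real.sqrt 3 * S3 x) ^ 2 + 1) + ((2 * Real.sqrt 3 * V1 x) ^ 2 + 1) + ((2 * Sx x) ^ 2 + 1) + ((-2 * V1 x) ^ 2 + 1) + ((4 * A x) ^ 2 + 1)) := by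
    have := hSpd.continuous; have := hSmd.continuous; have := hSxd.continuous; have := hV3d.continuous
    have := hS3d.continuous; have := hV1d.continuous; have := hAd.continuous
    fun_prop
  have hFzero := gr_zero (f := fun t => C1 t * C1 t + C2 t * C2 t + C3 t * C3 t
      + C4 t * C4 t + C5 t * C5 t + C6 t * C6 t)
    (f' := fun x => 2 * C1 x * (C1 x * (2 * q x + Sp x + Real.sqrt 3 * Sm x) - 2 * Real.sqrt 3 * C2 x * Sx x) + 2 * C2 x * (C2 x * (2 * q x + Sp x - Real.sqrt 3 * Sm x)) + 2 * C3 x * (2 * C3 x * (-1 + q x + Sp x) + C1 x * V3 x - Real.sqrt 3 * C5 x * S3 x) + 2 * C4 x * (C4 x * (-2 + 2 * q x - Sp x - Real.sqrt 3 * Sm x) + 2 * Real.sqrt 3 * C2 x * V1 x) + 2 * C5 x * (C5 x * (-2 + 2 * q x - Sp x + Real.sqrt 3 * Sm x) + 2 * (C4 x * Sx x - C1 x * V1 x)) + 2 * C6 x * (2 * q x * C6 x + 4 * A x * C3 x)) (K := fun x => ((2 * q x + Sp x + Real.sqrt 3 * Sm x) ^ 2 + 1) + ((2 * q x + Sp x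 - Real.sqrt 3 * Sm x) ^ 2 + 1) + ((2 * (-1 + q x + Sp x)) ^ 2 + 1) + ((-2 + 2 * q x - Sp x - Real.sqrt 3 * Sm x) ^ 2 + 1) + ((-2 + 2 * q x - Sp x + Real.sqrt 3 * Sm x) ^ 2 + 1) + ((2 * q x) ^ 2 + 1) + ((-2 * Real.sqrt 3 * Sx x) ^ 2 + 1) + ((V3 x) ^ 2 + 1) + ((-Real.sqrt 3 * S3 x) ^ 2 + 1) + ((2 * Real.sqrt 3 * V1 x) ^ 2 + 1) + ((2 * Sx x) ^ 2 + 1) + ((-2 * V1 x) ^ 2 + 1) + ((4 * A x) ^ 2 + 1))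
    hFder hKc hb hpos τ₀ hF0
  have hFt : C1 τ * C1 τ + C2 τ * C2 τ + C3 τ * C3 τ + C4 τ * C4 τ + C5 τ * C5 τ
      + C6 τ * C6 τ = 0 := hFzero τ
  refine ⟨?_, ?_, ?_, ?_, ?_, ?_⟩
  · exact mul_self_eq_zero.mp (le_antisymm (by nlinarith [mul_self_nonneg (C2 τ), mul_self_nonneg (C3 τ), mul_self_nonneg (C4 τ), mul_self_nonneg (C5 τ), mul_self_nonneg (C6 τ)]) (mul_self_nonneg _))
  · exact mul_self_eq_zero.mp (le_antisymm (by nlinarith [mul_self_nonneg (C1 τ), mul_self_nonneg (C3 τ), mul_self_nonneg (C4 τ), mul_self_nonneg (C5 τ), mul_self_nonneg (C6 τ)]) (mul_self_nonneg _))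
  · exact mul_self_eq_zero.mp (le_antisymm (by nlinarith [mul_self_nonneg (C1 τ), mul_self_nonneg (C2 τ), mul_self_nonneg (C4 τ), mul_self_nonneg (C5 τ), mul_self_nonneg (C6 τ)]) (mul_self_nonneg _))
  · exact mul_self_eq_zero.mp (le_antisymm (by nlinarith [mul_self_nonneg (C1 τ), mul_self_nonneg (C2 τ), mul_self_nonneg (C3 τ), mul_self_nonneg (C5 τ), mul_self_nonneg (C6 τ)]) (mul_self_nonneg _))
  · exact mul_self_eq_zero.mp (le_antisymm (by nlinarith [mul_self_nonneg (C1 τ), mul_self_nonneg (C2 τ), mul_self_nonneg (C3 τ), mul_self_nonneg (C4 τ), mul_self_nonneg (C6 τ)]) (mul_self_nonneg _))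
  · exact mul_self_eq_zero.mp (le_antisymm (by nlinarith [mul_self_nonneg (C1 τ), mul_self_nonneg (C2 τ), mul_self_nonneg (C3 τ), mul_self_nonneg (C4 τ), mul_self_nonneg (C5 τ)]) (mul_self_nonneg _))
end

section
/- Along solutions of the evolution equations, the derivative of C₂ = V₃(N₊ − √3 N₋) equals C₂·(2q + Σ₊ − √3 Σ₋); consequently, the zero set C₂ = 0 is preserved in time. -/
/-- Along solutions of the evolution equations, C₂ = V₃(N₊ − √3 N₋) satisfies
C₂' = C₂·(2q + Σ₊ − √3 Σ₋); consequently its zero set is preserved in time. -/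
theorem stmt4 (V3 Np Nm Sp Sm Sx Nx q : ℝ → ℝ)
    (hV3d : Differentiable ℝ V3) (hNpd : Differentiable ℝ Np) (hNmd : Differentiable ℝ Nm)
    (hq : Continuous q) (hSp : Continuous Sp) (hSm : Continuous Sm)
    (hV3 : ∀ τ, deriv V3 τ = V3 τ * (q τ - Sp τ + Real.sqrt 3 * Sm τ))
    (hNp : ∀ τ, deriv Np τ = Np τ * (q τ + 2 * Sp τ) + 6 * Sm τ * Nm τ + 6 * Sx τ * Nx τ)
    (hNm : ∀ τ, deriv Nm τ = Nm τ * (q τ + 2 * Sp τ) + 2 * Real.sqrt 3 * Sx τ * Nx τ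
      + 2 * Sm τ * Np τ) :
    (∀ τ, deriv (fun t => V3 t * (Np t - Real.sqrt 3 * Nm t)) τ
        = (V3 τ * (Np τ - Real.sqrt 3 * Nm τ)) * (2 * q τ + Sp τ - Real.sqrt 3 * Sm τ)) ∧
    (∀ τ₀, V3 τ₀ * (Np τ₀ - Real.sqrt 3 * Nm τ₀) = 0 →
      ∀ τ, V3 τ * (Np τ - Real.sqrt 3 * Nm τ) = 0) := by
  have h3 : Real.sqrt 3 * Real.sqrt 3 = 3 :=
    Real.mul_self_sqrt (by norm_num)
  set C : ℝ → ℝ := fun t => V3 t * (Np t - Real.sqrt 3 * Nm t) with hCdef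
  set g : ℝ → ℝ := fun t => 2 * q t + Sp t - Real.sqrt 3 * Sm t with hgdef
  have hCd : Differentiable ℝ C :=
    hV3d.mul (hNpd.sub ((differentiable_const _).mul hNmd))
  have key : ∀ τ, deriv C τ = C τ * g τ := by
    intro τ
    have : deriv C τ = deriv V3 τ * (Np τ - Real.sqrt 3 * Nm τ)
        + V3 τ * (deriv Np τ - Real.sqrt 3 * deriv Nm τ) := by
      rw [hCdef]
      rw [deriv_fun_mul (hV3d τ) ((hNpd τ).fun_sub ((hNmd τ).const_mul _))]
      rw [deriv_fun_sub (hNpd τ) ((hNmd τ).const_mul _),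
        deriv_const_mul _ (hNmd τ)]
    rw [this, hV3 τ, hNp τ, hNm τ]
    simp only [hCdef, hgdef]
    have hsq : Real.sqrt 3 ^ 2 = (3:ℝ) := Real.sq_sqrt (by norm_num)
    ring_nf
    rw [hsq]
    ring
  refine ⟨key, ?_⟩
  intro τ₀ h0 τ
  -- integrating factor
  set G : ℝ → ℝ := fun t => ∫ s in τ₀..t, g s with hGdef
  have hgc : Continuous g :=
    ((continuous_const.mul hq).add hSp).sub (continuous_const.mul hSm)
  have hG : ∀ t, HasDerivAt G (g t) t := fun t =>
    (hgc.integral_hasStrictDerivAt τ₀ t).hasDerivAt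
  set h : ℝ → ℝ := fun t => C t * Real.exp (-(G t)) with hhdef
  have hh : ∀ t, HasDerivAt h 0 t := by
    intro t
    have h1 : HasDerivAt C (C t * g t) t := by
      rw [← key t]; exact (hCd t).hasDerivAt
    have h2 : HasDerivAt (fun s => Real.exp (-(G s))) (Real.exp (-(G t)) * (-(g t))) t :=
      (((hG t).neg).exp)
    have := h1.fun_mul h2
    exact this.congr_deriv (by ring)
  have hconst : ∀ t, h t = h τ₀ := by
    intro t
    apply is_const_of_deriv_eq_zero (f := h)
    · exact fun s => (hh s).differentiableAt
    · intro s; exact (hh s).deriv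
  have hτ0 : h τ₀ = 0 := by
    simp only [hhdef, hCdef] at *
    rw [h0, zero_mul]
  have := hconst τ
  rw [hτ0] at this
  have hexp : Real.exp (-(G τ)) ≠ 0 := Real.exp_ne_zero _
  have : C τ = 0 := by
    by_contra hc
    exact hc (by
      have := mul_eq_zero.mp this
      tauto)
  simpa [hCdef] using this
end

section
/- Let Σ be the symmetric traceless 3×3 matrix with Σ₁₁=−2Σ₊, Σ₂₂=Σ₊+√3Σ₋, Σ₃₃=Σ₊−√3Σ₋, Σ₂₃=Σ₃₂=√3Σ×, Σ₁₂=Σ₂₁=√3Σ₂, Σ₁₃=Σ₃₁=√3Σ₃, with Σ₂=0. Then Σ is axially symmetric with symmetry axis V=(V₁,0,V₃) (V ≠ 0) — i.e., V is an eigenvector of Σ and the orthogonal complement of V is an eigenspace — if and only if Σ×=0, 2Σ₋V₁+Σ₃V₃=0, and Σ₃V₁+(Σ₋+√3Σ₊)V₃=0. -/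
open Matrix

/-!
The plane orthogonal to `V = (V₁, 0, V₃)` is spanned by `e₂` and `(-V₃, 0, V₁)`, so `Σ` acts on it
as `μ` iff both are `μ`-eigenvectors. For `e₂` this forces `Σ× = 0` and `μ = Σ₊ + √3 Σ₋`; for
`(-V₃, 0, V₁)` it is, after dividing by `√3`, exactly the pair of linear conditions. Conversely,
these conditions make `V` an eigenvector with eigenvalue `-2μ`, as tracelessness predicts.
-/

section Orthogonal

variable {K : Type*} [Field K] {V1 V3 : K}

lemma mem_span_of_dotProduct_eq_zero (hV : V1 ≠ 0 ∨ V3 ≠ 0) {w : Fin 3 → K}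
    (hw : ![V1, 0, V3] ⬝ᵥ w = 0) :
    w ∈ Submodule.span K {![0, 1, 0], ![-V3, 0, V1]} := by
  replace hw : V1 * w 0 + V3 * w 2 = 0 := by simpa [dotProduct, Fin.sum_univ_three] using hw
  rw [Submodule.mem_span_pair]
  rcases hV with h1 | h3
  · refine ⟨w 1, w 2 / V1, ?_⟩
    ext i; fin_cases i <;> simp
    · field_simp; linear_combination -hw
    · field_simp
  · refine ⟨w 1, -(w 0 / V3), ?_⟩
    ext i; fin_cases i <;> simp
    · field_simp
    · field_simp; linear_combination -hw

lemma forall_dotProduct_eq_zero_mulVec_eq_smul_iff (hV : V1 ≠ 0 ∨ V3 ≠ 0)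
    (M : Matrix (Fin 3) (Fin 3) K) (μ : K) :
    (∀ w : Fin 3 → K, ![V1, 0, V3] ⬝ᵥ w = 0 → M *ᵥ w = μ • w) ↔
      M *ᵥ ![0, 1, 0] = μ • ![0, 1, 0] ∧ M *ᵥ ![-V3, 0, V1] = μ • ![-V3, 0, V1] := by
  refine ⟨fun h ↦ ⟨h _ ?_, h _ ?_⟩, fun h w hw ↦ ?_⟩
  · simp
  · simp [mul_comm]
  · have hspan : Submodule.span K {![0, 1, 0], ![-V3, 0, V1]} ≤
        Module.End.eigenspace (toLin' M) μ := by
      simpa [Submodule.span_le, Set.insert_subset_iff, Module.End.mem_eigenspace_iff] using h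
    simpa [Module.End.mem_eigenspace_iff] using hspan (mem_span_of_dotProduct_eq_zero hV hw)

end Orthogonal

lemma eq_iff_eq_zero_of_sub_eq_mul {K : Type*} [Field K] {a b c k : K} (hk : k ≠ 0)
    (h : a - b = k * c) : a = b ↔ c = 0 := by
  rw [← sub_eq_zero, h, mul_eq_zero, or_iff_right hk]

/-- Reducible, so that lemmas about it rewrite the literal matrix of `stmt13`. -/
noncomputable abbrev shearMatrix (Sp Sm Sx S3 : ℝ) : Matrix (Fin 3) (Fin 3) ℝ :=
  !![-2 * Sp, 0, √3 * S3; 0, Sp + √3 * Sm, √3 * Sx; √3 * S3, √3 * Sx, Sp - √3 * Sm]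

section Shear

variable {Sp Sm Sx S3 V1 V3 : ℝ}

lemma shearMatrix_mulVec_e2_eq_smul_iff {μ : ℝ} :
    shearMatrix Sp Sm Sx S3 *ᵥ ![0, 1, 0] = μ • ![0, 1, 0] ↔ μ = Sp + √3 * Sm ∧ Sx = 0 := by
  simp [funext_iff, Fin.forall_fin_succ, shearMatrix, eq_comm (a := μ)]

lemma shearMatrix_mulVec_perp_eq_smul_iff :
    shearMatrix Sp Sm 0 S3 *ᵥ ![-V3, 0, V1] = (Sp + √3 * Sm) • ![-V3, 0, V1] ↔
      2 * Sm * V1 + S3 * V3 = 0 ∧ S3 * V1 + (Sm + √3 * Sp) * V3 = 0 := by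
  have h3 : √3 * √3 = 3 := Real.mul_self_sqrt (by norm_num)
  simp [funext_iff, Fin.forall_fin_succ, shearMatrix]
  rw [and_comm]
  exact and_congr (eq_iff_eq_zero_of_sub_eq_mul (k := -√3) (by simp) (by ring))
    (eq_iff_eq_zero_of_sub_eq_mul (k := √3) (by positivity)
      (by linear_combination -Sp * V3 * h3))

lemma shearMatrix_mulVec_axis (h1 : 2 * Sm * V1 + S3 * V3 = 0)
    (h2 : S3 * V1 + (Sm + √3 * Sp) * V3 = 0) :
    shearMatrix Sp Sm 0 S3 *ᵥ ![V1, 0, V3] = (-2 * (Sp + √3 * Sm)) • ![V1, 0, V3] := by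
  have h3 : √3 * √3 = 3 := Real.mul_self_sqrt (by norm_num)
  simp [funext_iff, Fin.forall_fin_succ, shearMatrix]
  constructor
  · linear_combination √3 * h1
  · linear_combination √3 * h2 - Sp * V3 * h3

end Shear

/-- The shear matrix (with Σ₂ = 0) is axially symmetric with symmetry axis
V = (V₁,0,V₃) ≠ 0 — i.e. V is an eigenvector and the plane orthogonal to V is an
eigenspace — iff Σ× = 0, 2Σ₋V₁ + Σ₃V₃ = 0 and Σ₃V₁ + (Σ₋+√3Σ₊)V₃ = 0. -/
theorem stmt13 (Sp Sm Sx S3 V1 V3 : ℝ) (hV : V1 ≠ 0 ∨ V3 ≠ 0) :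
    (∃ lam mu : ℝ,
      Matrix.mulVec
        (!![-2 * Sp, 0, Real.sqrt 3 * S3;
            0, Sp + Real.sqrt 3 * Sm, Real.sqrt 3 * Sx;
            Real.sqrt 3 * S3, Real.sqrt 3 * Sx, Sp - Real.sqrt 3 * Sm])
        ![V1, 0, V3] = lam • ![V1, 0, V3] ∧
      ∀ w : Fin 3 → ℝ, ![V1, 0, V3] ⬝ᵥ w = 0 →
        Matrix.mulVec
          (!![-2 * Sp, 0, Real.sqrt 3 * S3;
              0, Sp + Real.sqrt 3 * Sm, Real.sqrt 3 * Sx;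
              Real.sqrt 3 * S3, Real.sqrt 3 * Sx, Sp - Real.sqrt 3 * Sm]) w = mu • w)
    ↔
    (Sx = 0 ∧ 2 * Sm * V1 + S3 * V3 = 0 ∧
      S3 * V1 + (Sm + Real.sqrt 3 * Sp) * V3 = 0) := by
  simp_rw [forall_dotProduct_eq_zero_mulVec_eq_smul_iff hV, shearMatrix_mulVec_e2_eq_smul_iff]
  constructor
  · rintro ⟨-, _, -, ⟨rfl, rfl⟩, hperp⟩
    exact ⟨rfl, shearMatrix_mulVec_perp_eq_smul_iff.1 hperp⟩
  · rintro ⟨rfl, h1, h2⟩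
    exact ⟨_, _, shearMatrix_mulVec_axis h1 h2, ⟨rfl, rfl⟩,
      shearMatrix_mulVec_perp_eq_smul_iff.2 ⟨h1, h2⟩⟩
end

section
/- Suppose a state satisfies all shear components zero (Σ₊=Σ₋=Σ×=Σ₂=Σ₃=0) and the shear-free constraints: ΘV₁=0, ΘV₃=0, V₁V₃=0 together with 3·0²−2(N₋²+N×²)+V₃²−2V₁²=0 (from Σ₊'=0), √3(0)+2AN×−2N₋N₊−√3V₃²=0 (from Σ₋'=0), −2AN₋−2N₊N×=0 (from Σ×'=0), V₃(A−√3N×)=0, V₃(N₊−√3N₋)=0, and suppose V₃ > 0 (so Θ=V₁=0). Then A=√3N×, N₊=√3N₋, V₃²=2N×², and substituting, N₋=0, N₊=0, so A=√3N×>0 and V₃=√2·N×. -/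
/-! Since `V₃ ≠ 0`, the products `Θ V₃`, `V₁ V₃` and the two Maxwell constraints give
`Θ = V₁ = 0`, `A = √3 N×` and `N₊ = √3 N₋`. Substituting these, the `Σ₋` constraint becomes
`V₃² = 2N×² - 2N₋²`, while the `Σ₊` constraint reads `V₃² = 2N×² + 2N₋²`; hence `N₋ = 0`.
The sign convention `A ≥ 0` then fixes `N× > 0`, and `V₃ = √2 N×` is the positive root. -/

theorem Real.eq_sqrt_mul_of_sq_eq {c x y : ℝ} (hc : 0 ≤ c) (hx : 0 ≤ x) (hy : 0 ≤ y)
    (h : x ^ 2 = c * y ^ 2) : x = √c * y := by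
  rw [← Real.sqrt_sq hx, h, Real.sqrt_mul hc, Real.sqrt_sq hy]

theorem stmt15_general (Th V1 V3 A Np Nm Nx : ℝ)
    (hAconv : 0 ≤ A)
    (hTV3 : Th * V3 = 0) (hV1V3 : V1 * V3 = 0)
    (hSp : 3 * (0 : ℝ) ^ 2 - 2 * (Nm ^ 2 + Nx ^ 2) + V3 ^ 2 - 2 * V1 ^ 2 = 0)
    (hSm : Real.sqrt 3 * 0 + 2 * A * Nx - 2 * Nm * Np - Real.sqrt 3 * V3 ^ 2 = 0)
    (hC1 : V3 * (A - Real.sqrt 3 * Nx) = 0)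
    (hC2 : V3 * (Np - Real.sqrt 3 * Nm) = 0)
    (hV3 : V3 > 0) :
    Th = 0 ∧ V1 = 0 ∧
    A = Real.sqrt 3 * Nx ∧ Np = Real.sqrt 3 * Nm ∧
    V3 ^ 2 = 2 * Nx ^ 2 ∧ Nm = 0 ∧ Np = 0 ∧
    0 < A ∧ V3 = Real.sqrt 2 * Nx := by
  have hTh : Th = 0 := (mul_eq_zero.mp hTV3).resolve_right hV3.ne'
  have hV1 : V1 = 0 := (mul_eq_zero.mp hV1V3).resolve_right hV3.ne'
  have hA : A = √3 * Nx := sub_eq_zero.mp ((mul_eq_zero.mp hC1).resolve_left hV3.ne')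
  have hNp : Np = √3 * Nm := sub_eq_zero.mp ((mul_eq_zero.mp hC2).resolve_left hV3.ne')
  have hV3sq_add : V3 ^ 2 = 2 * Nx ^ 2 + 2 * Nm ^ 2 := by rw [hV1] at hSp; linarith
  have hV3sq_sub : V3 ^ 2 = 2 * Nx ^ 2 - 2 * Nm ^ 2 := by
    refine mul_left_cancel₀ (by positivity : √3 ≠ 0) ?_
    rw [hA, hNp] at hSm
    linear_combination -hSm
  have hNm : Nm = 0 := pow_eq_zero_iff two_ne_zero |>.mp (by linarith)
  have hV3sq : V3 ^ 2 = 2 * Nx ^ 2 := by simpa [hNm] using hV3sq_add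
  have hNx : 0 < Nx := by
    refine (nonneg_of_mul_nonneg_right (hA ▸ hAconv) (by positivity)).lt_of_ne' fun h => ?_
    exact (pow_pos hV3 2).ne' (by simp [hV3sq, h])
  refine ⟨hTh, hV1, hA, hNp, hV3sq, hNm, by simp [hNp, hNm], hA ▸ by positivity, ?_⟩
  exact Real.eq_sqrt_mul_of_sq_eq zero_le_two hV3.le hNx.le hV3sq

/-- Characterization of the shear-free set beyond FLRW: with V₃ > 0 (so Θ = V₁ = 0),
the shear-free constraints force A = √3 N×, N₊ = √3 N₋, V₃² = 2N×², N₋ = 0, N₊ = 0,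
hence A = √3 N× > 0 and V₃ = √2·N×. (The sign convention A ≥ 0 is assumed.) -/
theorem stmt15 (Th V1 V3 A Np Nm Nx : ℝ)
    (hAconv : 0 ≤ A)
    (hTV1 : Th * V1 = 0) (hTV3 : Th * V3 = 0) (hV1V3 : V1 * V3 = 0)
    (hSp : 3 * (0 : ℝ) ^ 2 - 2 * (Nm ^ 2 + Nx ^ 2) + V3 ^ 2 - 2 * V1 ^ 2 = 0)
    (hSm : Real.sqrt 3 * 0 + 2 * A * Nx - 2 * Nm * Np - Real.sqrt 3 * V3 ^ 2 = 0)
    (hSx : -2 * A * Nm - 2 * Np * Nx = 0)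
    (hC1 : V3 * (A - Real.sqrt 3 * Nx) = 0)
    (hC2 : V3 * (Np - Real.sqrt 3 * Nm) = 0)
    (hV3 : V3 > 0) :
    Th = 0 ∧ V1 = 0 ∧
    A = Real.sqrt 3 * Nx ∧ Np = Real.sqrt 3 * Nm ∧
    V3 ^ 2 = 2 * Nx ^ 2 ∧ Nm = 0 ∧ Np = 0 ∧
    0 < A ∧ V3 = Real.sqrt 2 * Nx :=
  stmt15_general Th V1 V3 A Np Nm Nx hAconv hTV3 hV1V3 hSp hSm hC1 hC2 hV3
end
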